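/- arXiv:1705.07504 — 2 statements merged into one kernel-verified Lean document; each statement's English description precedes it below -/
import Mathlib

section
/- For every positive integer m, the identity (q;q)_{m-1} = Σ_{i≥0} q^{mi} (q^{i+1};q)_∞ holds in the ring ℤ[[q]] of formal power series, where the sum on the right converges q-adically. -/
/-- The finite q-Pochhammer symbol `(q;q)_m = ∏_{i=1}^{m} (1 - q^i)` as a polynomial in `ℤ[q]`. -/
noncomputable def qPoch (m : ℕ) : Polynomial ℤ :=
  ∏ i ∈ Finset.range m, (1 - Polynomial.X ^ (i + 1))

/-- The infinite product `(q^a;q)_∞ = ∏_{i ≥ 0} (1 - q^{a+i})` in `ℤ[[q]]` (for `a ≥ 1`),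
defined coefficientwise via sufficiently large partial products. -/
noncomputable def pochInf (a : ℕ) : PowerSeries ℤ :=
  PowerSeries.mk fun n =>
    (∏ i ∈ Finset.range (n + 1), (1 - Polynomial.X ^ (a + i)) : Polynomial ℤ).coeff n

/-!
Write `P a = (q^a;q)_∞`, so that `P a = (1 - q^a) P (a+1)` and `P 0 = 0`. Then
`q^{(m+1)i} P (i+1) = q^{mi} (P (i+1) - P i)`, and Abel summation turns
`S m = ∑_i q^{mi} P (i+1)` into `S (m+1) = (1 - q^m) S m`, while `S 1` telescopes to
`lim P N = 1`. For partial sums with `N` terms these identities hold up to the boundary term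
`q^{mN} P (N+1)`, so `(q;q)_m` agrees with `N` terms of `S (m+1)` modulo `q^n` once `n + m ≤ N`.
-/

open PowerSeries Finset

section

variable {R : Type*} [CommRing R]

theorem PowerSeries.coeff_eq_of_X_pow_dvd_sub {k d : ℕ} {f g : R⟦X⟧} (h : X ^ k ∣ f - g)
    (hd : d < k) : coeff d f = coeff d g := by
  rw [← sub_eq_zero, ← map_sub]
  exact X_pow_dvd_iff.1 h d hd

theorem PowerSeries.X_pow_dvd_prod_one_sub_X_pow_sub_one {ι : Type*} {s : Finset ι} {e : ι → ℕ} {c : ℕ}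
    (h : ∀ i ∈ s, c ≤ e i) : (X : R⟦X⟧) ^ c ∣ ∏ i ∈ s, (1 - X ^ e i) - 1 := by
  have hmod :
      ∏ i ∈ s, (1 - X ^ e i) ≡ ∏ _i ∈ s, 1 [SMOD Ideal.span {(X : R⟦X⟧) ^ c}] :=
    SModEq.prod fun i hi => SModEq.sub_mem.2 <| Ideal.mem_span_singleton.2 <| by
      simpa using pow_dvd_pow X (h i hi)
  simpa [SModEq.sub_mem, Ideal.mem_span_singleton] using hmod

theorem PowerSeries.X_pow_dvd_prod_range_sub_prod_range (a : ℕ) {N N' : ℕ} (h : N ≤ N') :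
    (X : R⟦X⟧) ^ (a + N) ∣
      ∏ i ∈ range N', (1 - X ^ (a + i)) - ∏ i ∈ range N, (1 - X ^ (a + i)) := by
  rw [← prod_range_mul_prod_Ico _ h, ← mul_sub_one]
  exact Dvd.dvd.mul_left (X_pow_dvd_prod_one_sub_X_pow_sub_one fun i hi => by
    simp only [mem_Ico] at hi; omega) _

theorem PowerSeries.coeff_prod_range_one_sub_X_pow_eq (a : ℕ) {d N N' : ℕ} (hN : d < a + N)
    (hN' : d < a + N') :
    coeff d (∏ i ∈ range N, (1 - X ^ (a + i)) : R⟦X⟧) =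
      coeff d (∏ i ∈ range N', (1 - X ^ (a + i)) : R⟦X⟧) := by
  rcases le_total N N' with h | h
  · exact (coeff_eq_of_X_pow_dvd_sub (X_pow_dvd_prod_range_sub_prod_range a h) hN).symm
  · exact coeff_eq_of_X_pow_dvd_sub (X_pow_dvd_prod_range_sub_prod_range a h) hN'

/-- Abel summation: by `hP`, `q ^ ((m + 1) * i) * P (i + 1) = q ^ (m * i) * (P (i + 1) - P i)`
for `i ≥ 1`. -/
theorem sum_range_succ_pow_mul_eq (q : R) (P : ℕ → R)
    (hP : ∀ i, P (i + 1) = (1 - q ^ (i + 1)) * P (i + 2)) (m N : ℕ) :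
    ∑ i ∈ range (N + 1), q ^ ((m + 1) * i) * P (i + 1) =
      q ^ (m * N) * P (N + 1) + (1 - q ^ m) * ∑ i ∈ range N, q ^ (m * i) * P (i + 1) := by
  induction N with
  | zero => simp
  | succ N ih =>
    rw [sum_range_succ, ih, sum_range_succ, hP N]
    ring

end

theorem coeff_pochInf (a n : ℕ) :
    coeff n (pochInf a) = coeff n (∏ i ∈ range (n + 1), (1 - X ^ (a + i)) : ℤ⟦X⟧) := by
  rw [pochInf, coeff_mk, ← Polynomial.coeff_coe, ← Polynomial.coeToPowerSeries.ringHom_apply,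
    map_prod]
  simp

theorem X_pow_dvd_pochInf_sub_prod (a N : ℕ) :
    X ^ (a + N) ∣ pochInf a - ∏ i ∈ range N, (1 - X ^ (a + i)) := by
  refine X_pow_dvd_iff.2 fun d hd => ?_
  rw [map_sub, coeff_pochInf, sub_eq_zero]
  exact coeff_prod_range_one_sub_X_pow_eq a (by omega) hd

theorem pochInf_zero : pochInf 0 = 0 := by
  ext n
  simp [coeff_pochInf, prod_range_succ']

theorem X_pow_dvd_pochInf_sub_one (a : ℕ) : X ^ a ∣ pochInf a - 1 := by
  simpa using X_pow_dvd_pochInf_sub_prod a 0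

theorem pochInf_eq_one_sub_X_pow_mul (a : ℕ) : pochInf a = (1 - X ^ a) * pochInf (a + 1) := by
  ext n
  refine coeff_eq_of_X_pow_dvd_sub (k := a + (n + 1)) ?_ (by omega)
  have hprod : ∏ i ∈ range (n + 1), (1 - X ^ (a + i)) =
      (1 - X ^ a) * ∏ i ∈ range n, (1 - X ^ (a + 1 + i) : ℤ⟦X⟧) := by
    rw [prod_range_succ', mul_comm]
    simp only [add_zero, add_assoc, add_comm 1]
  have hdiff : pochInf a - (1 - X ^ a) * pochInf (a + 1) =
      (pochInf a - ∏ i ∈ range (n + 1), (1 - X ^ (a + i))) -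
        (1 - X ^ a) * (pochInf (a + 1) - ∏ i ∈ range n, (1 - X ^ (a + 1 + i))) := by
    rw [hprod]; ring
  rw [hdiff, show a + (n + 1) = a + 1 + n by omega]
  exact dvd_sub (by simpa [add_assoc, add_comm 1 n] using X_pow_dvd_pochInf_sub_prod a (n + 1))
    ((X_pow_dvd_pochInf_sub_prod (a + 1) n).mul_left _)

noncomputable def pochInfPartialSum (m N : ℕ) : ℤ⟦X⟧ :=
  ∑ i ∈ range N, X ^ (m * i) * pochInf (i + 1)

theorem pochInfPartialSum_succ_succ (m N : ℕ) :
    pochInfPartialSum (m + 1) (N + 1) =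
      X ^ (m * N) * pochInf (N + 1) + (1 - X ^ m) * pochInfPartialSum m N :=
  sum_range_succ_pow_mul_eq X pochInf (fun i => pochInf_eq_one_sub_X_pow_mul (i + 1)) m N

theorem pochInfPartialSum_one (N : ℕ) : pochInfPartialSum 1 N = pochInf N := by
  cases N with
  | zero => simp [pochInfPartialSum, pochInf_zero]
  | succ N => simpa using pochInfPartialSum_succ_succ 0 N

theorem coe_qPoch_succ (m : ℕ) :
    ((qPoch (m + 1) : Polynomial ℤ) : ℤ⟦X⟧) =
      (qPoch m : ℤ⟦X⟧) * (1 - X ^ (m + 1)) := by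
  simp [qPoch, prod_range_succ]

theorem X_pow_dvd_qPoch_sub_pochInfPartialSum {n m N : ℕ} (h : n + m ≤ N) :
    X ^ n ∣ (qPoch m : ℤ⟦X⟧) - pochInfPartialSum (m + 1) N := by
  induction m generalizing N with
  | zero =>
    rw [pochInfPartialSum_one, ← neg_sub, dvd_neg]
    simpa [qPoch] using (pow_dvd_pow X (by omega : n ≤ N)).trans (X_pow_dvd_pochInf_sub_one N)
  | succ m ih =>
    obtain ⟨N, rfl⟩ : ∃ N', N = N' + 1 := ⟨N - 1, by omega⟩
    have htail : X ^ n ∣ (X : ℤ⟦X⟧) ^ ((m + 1) * N) := pow_dvd_pow X (by nlinarith)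
    have hsplit : (qPoch (m + 1) : ℤ⟦X⟧) - pochInfPartialSum (m + 2) (N + 1) =
        (1 - X ^ (m + 1)) * ((qPoch m : ℤ⟦X⟧) - pochInfPartialSum (m + 1) N) -
          X ^ ((m + 1) * N) * pochInf (N + 1) := by
      rw [coe_qPoch_succ, pochInfPartialSum_succ_succ]
      ring
    rw [hsplit]
    exact dvd_sub ((ih (by omega)).mul_left _) (htail.mul_right _)

theorem coeff_pochInfPartialSum {m n N : ℕ} (hm : 1 ≤ m) (hN : n < N) :
    coeff n (pochInfPartialSum m N) =
      ∑ i ∈ range (n + 1), coeff n (X ^ (m * i) * pochInf (i + 1)) := by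
  rw [pochInfPartialSum, map_sum]
  refine (sum_subset (range_subset_range.2 hN) fun i _ hi => ?_).symm
  rw [coeff_X_pow_mul', if_neg]
  simp only [mem_range, not_lt] at hi
  nlinarith

/-- `(q;q)_{m-1} = Σ_{i ≥ 0} q^{mi} (q^{i+1};q)_∞` in `ℤ[[q]]`.  The right-hand side
converges q-adically: the term with index `i` is divisible by `q^{mi}`, so for each `n`
only the terms with `i ≤ n` can contribute to the coefficient of `q^n`; hence the q-adic
sum is characterized coefficientwise by the finite truncation `i ≤ n`. -/
theorem qPoch_as_qadic_sum (m : ℕ) (hm : 1 ≤ m) :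
    ∀ n : ℕ, PowerSeries.coeff n ((qPoch (m - 1) : Polynomial ℤ) : PowerSeries ℤ) =
      ∑ i ∈ Finset.range (n + 1),
        PowerSeries.coeff n ((PowerSeries.X : PowerSeries ℤ) ^ (m * i) * pochInf (i + 1)) := by
  intro n
  obtain ⟨k, rfl⟩ : ∃ k, m = k + 1 := ⟨m - 1, by omega⟩
  rw [Nat.add_sub_cancel, ← coeff_pochInfPartialSum (N := n + 1 + k) hm (by omega)]
  exact coeff_eq_of_X_pow_dvd_sub (X_pow_dvd_qPoch_sub_pochInfPartialSum le_rfl) n.lt_succ_self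
end

section
/- The formal power series F_2(q) = Σ_{j≥0} q^{2j} (q;q)_j is of Bloch–Pólya type, i.e., all of its coefficients lie in {-1, 0, 1}. -/
/-- The formal power series `F_k(q) = Σ_{j ≥ 0} q^{kj} (q;q)_j ∈ ℤ[[q]]` (for `k ≥ 1`),
defined coefficientwise: the term with index `j` is divisible by `q^{kj}`,
so only terms with `j ≤ n` contribute to the coefficient of `q^n`. -/
noncomputable def Fser (k : ℕ) : PowerSeries ℤ :=
  PowerSeries.mk fun n =>
    (∑ j ∈ Finset.range (n + 1), Polynomial.X ^ (k * j) * qPoch j : Polynomial ℤ).coeff n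

open Finset PowerSeries

section QSeries

variable {R : Type*} [CommRing R]

def qPochFrom (q : R) (a m : ℕ) : R :=
  ∏ i ∈ range m, (1 - q ^ (i + a))

def qPartialSum (q : R) (a b M : ℕ) : R :=
  ∑ j ∈ range M, q ^ (b * j) * qPochFrom q a j

lemma qPochFrom_zero (q : R) (a : ℕ) : qPochFrom q a 0 = 1 :=
  prod_range_zero _

lemma qPochFrom_succ (q : R) (a m : ℕ) :
    qPochFrom q a (m + 1) = qPochFrom q a m * (1 - q ^ (m + a)) :=
  prod_range_succ _ _

lemma qPochFrom_succ' (q : R) (a m : ℕ) :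
    qPochFrom q a (m + 1) = (1 - q ^ a) * qPochFrom q (a + 1) m := by
  rw [qPochFrom, prod_range_succ', mul_comm, qPochFrom]
  simp only [zero_add, add_assoc, add_comm 1 a]

lemma map_qPartialSum {S : Type*} [CommRing S] (f : R →+* S) (q : R) (a b M : ℕ) :
    f (qPartialSum q a b M) = qPartialSum (f q) a b M := by
  simp [qPartialSum, qPochFrom]

lemma qPartialSum_succ (q : R) (a b M : ℕ) :
    qPartialSum q a b (M + 1) = 1 + (q ^ b - q ^ (a + b)) * qPartialSum q (a + 1) b M := by
  rw [qPartialSum, sum_range_succ', qPartialSum, mul_sum, mul_zero, pow_zero, qPochFrom_zero,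
    mul_one, add_comm]
  congr 1
  refine sum_congr rfl fun j _ => ?_
  rw [qPochFrom_succ']
  ring

lemma one_sub_pow_mul_qPartialSum (q : R) (a b M : ℕ) :
    (1 - q ^ b) * qPartialSum q a b M
      = 1 - q ^ (a + b) * qPartialSum q a (b + 1) M - q ^ (b * M) * qPochFrom q a M := by
  have step : ∀ j, q ^ (b * (j + 1)) * qPochFrom q a (j + 1) - q ^ (b * j) * qPochFrom q a j
      = -((1 - q ^ b) * (q ^ (b * j) * qPochFrom q a j))
        - q ^ (a + b) * (q ^ ((b + 1) * j) * qPochFrom q a j) := by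
    intro j
    rw [qPochFrom_succ]
    ring
  have telescope := sum_range_sub (fun j => q ^ (b * j) * qPochFrom q a j) M
  simp only [step] at telescope
  rw [sum_sub_distrib, sum_neg_distrib, ← mul_sum, ← mul_sum, mul_zero, pow_zero,
    qPochFrom_zero, mul_one] at telescope
  rw [qPartialSum, qPartialSum]
  linear_combination -telescope

lemma pow_dvd_qPartialSum_sub {b : ℕ} (hb : 0 < b) (q : R) (a : ℕ) {M N : ℕ} (h : M ≤ N) :
    q ^ M ∣ qPartialSum q a b N - qPartialSum q a b M := by
  rw [qPartialSum, qPartialSum, ← sum_Ico_eq_sub _ h]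
  exact dvd_sum fun j hj =>
    (pow_dvd_pow q ((mem_Ico.mp hj).1.trans (Nat.le_mul_of_pos_left j hb))).mul_right _

/-- `Σ_{j ≥ 0} q^{bj} (q^a;q)_j`, with `qPochFrom q a j = (q^a;q)_j`; defined coefficientwise
like `Fser`. -/
noncomputable def qSeries (a b : ℕ) : R⟦X⟧ :=
  mk fun n => (qPartialSum (Polynomial.X : Polynomial R) a b (n + 1)).coeff n

lemma Fser_eq_qSeries (k : ℕ) : Fser k = qSeries 1 k := rfl

lemma eq_of_forall_X_pow_dvd_sub {f g : R⟦X⟧} (h : ∀ M, (X : R⟦X⟧) ^ M ∣ f - g) : f = g := by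
  ext n
  have := X_pow_dvd_iff.mp (h (n + 1)) n n.lt_succ_self
  rwa [map_sub, sub_eq_zero] at this

lemma coe_qPartialSum (a b M : ℕ) :
    ((qPartialSum Polynomial.X a b M : Polynomial R) : R⟦X⟧) = qPartialSum X a b M := by
  rw [← Polynomial.coeToPowerSeries.ringHom_apply, map_qPartialSum,
    Polynomial.coeToPowerSeries.ringHom_apply, Polynomial.coe_X]

lemma X_pow_dvd_qSeries_sub {b : ℕ} (hb : 0 < b) (a M : ℕ) :
    (X : R⟦X⟧) ^ M ∣ qSeries a b - qPartialSum X a b M := by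
  rw [← coe_qPartialSum, X_pow_dvd_iff]
  intro m hm
  have := Polynomial.X_pow_dvd_iff.mp
    (pow_dvd_qPartialSum_sub hb (Polynomial.X : Polynomial R) a hm) m m.lt_succ_self
  rw [Polynomial.coeff_sub, sub_eq_zero] at this
  rw [map_sub, qSeries, coeff_mk, Polynomial.coeff_coe, this, sub_self]

lemma qSeries_eq_one_add {b : ℕ} (hb : 0 < b) (a : ℕ) :
    (qSeries a b : R⟦X⟧) = 1 + (X ^ b - X ^ (a + b)) * qSeries (a + 1) b := by
  refine eq_of_forall_X_pow_dvd_sub fun M => ?_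
  have h := X_pow_dvd_qSeries_sub (R := R) hb a (M + 1)
  have h' := X_pow_dvd_qSeries_sub (R := R) hb (a + 1) M
  rw [qPartialSum_succ] at h
  have := dvd_sub ((pow_dvd_pow X M.le_succ).trans h) (h'.mul_left (X ^ b - X ^ (a + b)))
  convert this using 1
  ring

lemma one_sub_X_pow_mul_qSeries {b : ℕ} (hb : 0 < b) (a : ℕ) :
    (1 - X ^ b) * (qSeries a b : R⟦X⟧) = 1 - X ^ (a + b) * qSeries a (b + 1) := by
  refine eq_of_forall_X_pow_dvd_sub fun M => ?_
  have h := (X_pow_dvd_qSeries_sub (R := R) hb a M).mul_left (1 - X ^ b)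
  have h' := (X_pow_dvd_qSeries_sub (R := R) b.succ_pos a M).mul_left (X ^ (a + b))
  have tail : (X : R⟦X⟧) ^ M ∣ X ^ (b * M) * qPochFrom X a M :=
    (pow_dvd_pow X (Nat.le_mul_of_pos_left M hb)).mul_right _
  rw [mul_sub, one_sub_pow_mul_qPartialSum] at h
  have := dvd_add (dvd_sub h tail) h'
  convert this using 1
  ring

lemma qSeries_diag {a : ℕ} (ha : 0 < a) :
    (qSeries a a : R⟦X⟧) = 1 + X ^ a - X ^ (3 * a + 1) * qSeries (a + 1) (a + 1) := by
  rw [qSeries_eq_one_add ha a]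
  linear_combination (X : R⟦X⟧) ^ a * one_sub_X_pow_mul_qSeries (R := R) ha (a + 1)

lemma coeff_qSeries_diag {a : ℕ} (ha : 0 < a) (n : ℕ) :
    coeff n (qSeries a a : R⟦X⟧) = (if n = 0 then 1 else 0) + (if n = a then 1 else 0)
      - if 3 * a + 1 ≤ n then coeff (n - (3 * a + 1)) (qSeries (a + 1) (a + 1) : R⟦X⟧) else 0 := by
  rw [qSeries_diag ha, map_sub, map_add, coeff_one, coeff_X_pow, coeff_X_pow_mul']

lemma coeff_qSeries_diag_of_lt {a n : ℕ} (ha : 0 < a) (hn : n < 3 * a + 1) :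
    coeff n (qSeries a a : R⟦X⟧) = if n = 0 ∨ n = a then 1 else 0 := by
  rw [coeff_qSeries_diag ha, if_neg (not_le.mpr hn), sub_zero]
  by_cases h₀ : n = 0 <;> by_cases h₁ : n = a <;> simp [h₀, h₁] <;> omega

lemma coeff_qSeries_diag_of_le {a n : ℕ} (ha : 0 < a) (hn : 3 * a + 1 ≤ n) :
    coeff n (qSeries a a : R⟦X⟧) = -coeff (n - (3 * a + 1)) (qSeries (a + 1) (a + 1) : R⟦X⟧) := by
  rw [coeff_qSeries_diag ha, if_pos hn, if_neg (by omega), if_neg (by omega), zero_add, zero_sub]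

lemma neg_mem_signs {x : R} (h : x ∈ ({-1, 0, 1} : Set R)) : -x ∈ ({-1, 0, 1} : Set R) := by
  rcases h with rfl | rfl | rfl <;> simp

lemma coeff_qSeries_diag_mem {a : ℕ} (ha : 0 < a) (n : ℕ) :
    coeff n (qSeries a a : R⟦X⟧) ∈ ({-1, 0, 1} : Set R) := by
  induction n using Nat.strong_induction_on generalizing a with
  | _ n ih =>
    rcases lt_or_ge n (3 * a + 1) with hsmall | hlarge
    · rw [coeff_qSeries_diag_of_lt ha hsmall]
      split_ifs <;> simp
    · rw [coeff_qSeries_diag_of_le ha hlarge]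
      exact neg_mem_signs (ih (n - (3 * a + 1)) (by omega) (a + 1).pos_of_neZero)

lemma coeff_qSeries_diag_succ_eq_zero {a n : ℕ} (ha : 0 < a) (hn : 0 < n)
    (h : coeff n (qSeries a a : R⟦X⟧) ≠ 0) : coeff (n + 1) (qSeries a a : R⟦X⟧) = 0 := by
  induction n using Nat.strong_induction_on generalizing a with
  | _ n ih =>
    rcases lt_or_ge n (3 * a + 1) with hsmall | hlarge
    · rw [coeff_qSeries_diag_of_lt ha hsmall, ite_ne_right_iff] at h
      rw [coeff_qSeries_diag_of_lt ha (by omega), if_neg (by omega)]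
    · rw [coeff_qSeries_diag_of_le ha hlarge, neg_ne_zero] at h
      rw [coeff_qSeries_diag_of_le ha (by omega), neg_eq_zero,
        show n + 1 - (3 * a + 1) = n - (3 * a + 1) + 1 by omega]
      rcases Nat.eq_zero_or_pos (n - (3 * a + 1)) with h₀ | hpos
      · rw [h₀, coeff_qSeries_diag_of_lt (a + 1).pos_of_neZero (by omega), if_neg (by omega)]
      · exact ih _ (by omega) (a + 1).pos_of_neZero hpos h

end QSeries

lemma coeff_Fser_two (n : ℕ) :
    coeff n (Fser 2) = coeff (n + 1) (qSeries 1 1 : ℤ⟦X⟧) - coeff (n + 2) (qSeries 1 1 : ℤ⟦X⟧) := by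
  have h := congrArg (coeff (n + 2)) (one_sub_X_pow_mul_qSeries (R := ℤ) one_pos 1)
  rw [sub_mul, one_mul, pow_one, map_sub, map_sub, coeff_succ_X_mul, coeff_one, if_neg (by omega),
    coeff_X_pow_mul', if_pos (by omega),
    show n + 2 - (1 + 1) = n by omega] at h
  rw [Fser_eq_qSeries]
  linear_combination h

theorem F2_blochPolya :
    ∀ n : ℕ, PowerSeries.coeff n (Fser 2) ∈ ({-1, 0, 1} : Set ℤ) := by
  intro n
  rw [coeff_Fser_two]
  have h₁ := coeff_qSeries_diag_mem (R := ℤ) one_pos (n + 1)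
  have h₂ := coeff_qSeries_diag_mem (R := ℤ) one_pos (n + 2)
  have isolated := coeff_qSeries_diag_succ_eq_zero (R := ℤ) one_pos n.succ_pos
  rcases eq_or_ne (coeff (n + 1) (qSeries 1 1 : ℤ⟦X⟧)) 0 with h | h
  · rw [h, zero_sub]
    exact neg_mem_signs h₂
  · rw [isolated h, sub_zero]
    exact h₁
end
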